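/- T(n) is odd if and only if n is a Jacobsthal number, i.e. n = J_m for some m. -/
import Mathlib


open Nat Finset

/-- The ASM counting sequence `T(n) = ∏_{j=0}^{n-1} (3j+1)!/(n+j)!`. -/
def T (n : ℕ) : ℚ := ∏ j ∈ Finset.range n, ((3 * j + 1)! : ℚ) / ((n + j)! : ℚ)

/-- The Jacobsthal numbers: `J 0 = J 1 = 1`, `J (n+2) = J (n+1) + 2 * J n`. -/
def J : ℕ → ℕ
  | 0 => 1
  | 1 => 1
  | (n + 2) => J (n + 1) + 2 * J n

/-- Sum of the base-`p` digits of `n`. -/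
def S (p n : ℕ) : ℕ := (Nat.digits p n).sum

/-- The generalized sequence `T_p(n) = ∏_{j=0}^{n-1} (pj+1)!/(n+j)!`. -/
def Tp (p n : ℕ) : ℚ := ∏ j ∈ Finset.range n, ((p * j + 1)! : ℚ) / ((n + j)! : ℚ)

/-! ### Binary digit sum lemmas -/

lemma S2_even (k : ℕ) : S 2 (2 * k) = S 2 k := by
  rcases Nat.eq_zero_or_pos k with h | h
  · simp [h]
  · unfold S
    rw [Nat.digits_def' (by norm_num : (1:ℕ) < 2) (by omega)]
    simp [Nat.mul_mod_right, Nat.mul_div_cancel_left _ (by norm_num : 0 < 2)]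

lemma S2_odd (k : ℕ) : S 2 (2 * k + 1) = S 2 k + 1 := by
  unfold S
  rw [Nat.digits_def' (by norm_num : (1:ℕ) < 2) (by omega)]
  have h1 : (2 * k + 1) % 2 = 1 := by omega
  have h2 : (2 * k + 1) / 2 = k := by omega
  rw [h1, h2]
  simp [Nat.add_comm]

/-! ### The valuation sequence `Fv` -/

/-- Increment of the 2-adic valuation of the ASM numbers. -/
def dd (k : ℕ) : ℤ := 1 + (S 2 k : ℤ) - (S 2 (3 * k + 1) : ℤ)

/-- The 2-adic valuation of `T n`. -/
def Fv : ℕ → ℤ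
  | 0 => 0
  | (k + 1) => Fv k + dd k

lemma Fv_succ (k : ℕ) : Fv (k + 1) = Fv k + dd k := rfl

lemma dd_four0 (m : ℕ) : dd (4 * m) = dd (2 * m) := by
  unfold dd
  rw [show 4 * m = 2 * (2 * m) by ring, S2_even, S2_even,
    show 3 * (2 * (2 * m)) + 1 = 2 * (2 * (3 * m)) + 1 by ring, S2_odd, S2_even,
    show 3 * (2 * m) + 1 = 2 * (3 * m) + 1 by ring, S2_odd]

lemma dd_four1 (m : ℕ) : dd (4 * m + 1) = dd m + 1 := by
  unfold dd
  rw [show 4 * m + 1 = 2 * (2 * m) + 1 by ring, S2_odd, S2_even,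
    show 3 * (2 * (2 * m) + 1) + 1 = 2 * (2 * (3 * m + 1)) by ring, S2_even, S2_even]
  push_cast; ring

lemma dd_four2 (m : ℕ) : dd (4 * m + 2) = dd m - 1 := by
  unfold dd
  rw [show 4 * m + 2 = 2 * (2 * m + 1) by ring, S2_even, S2_odd,
    show 3 * (2 * (2 * m + 1)) + 1 = 2 * (2 * (3 * m + 1) + 1) + 1 by ring, S2_odd, S2_odd]
  push_cast; ring

lemma dd_four3 (m : ℕ) : dd (4 * m + 3) = dd (2 * m + 1) := by
  unfold dd
  rw [show 4 * m + 3 = 2 * (2 * m + 1) + 1 by ring, S2_odd, S2_odd,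
    show 3 * (2 * (2 * m + 1) + 1) + 1 = 2 * (2 * (3 * m + 2) + 1) by ring, S2_even, S2_odd,
    show 3 * (2 * m + 1) + 1 = 2 * (3 * m + 2) by ring, S2_even]
  push_cast; ring

/-- The key self-similar recurrences for `Fv`. -/
lemma Fv_rec (n : ℕ) :
    Fv (4 * n) = 2 * Fv n + Fv (2 * n) ∧
    Fv (4 * n + 1) = 2 * Fv n + Fv (2 * n + 1) ∧
    Fv (4 * n + 2) = Fv n + Fv (n + 1) + Fv (2 * n + 1) + 1 ∧
    Fv (4 * n + 3) = 2 * Fv (n + 1) + Fv (2 * n + 1) := by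
  induction n with
  | zero =>
    have h0 : Fv 0 = 0 := rfl
    have h1 : Fv 1 = Fv 0 + dd 0 := rfl
    have h2 : Fv 2 = Fv 1 + dd 1 := rfl
    have h3 : Fv 3 = Fv 2 + dd 2 := rfl
    have d0 : dd 0 = 0 := by unfold dd S; norm_num
    have d1 : dd 1 = 1 := by unfold dd S; norm_num
    have d2 : dd 2 = -1 := by unfold dd S; norm_num
    refine ⟨?_, ?_, ?_, ?_⟩ <;> simp only [Nat.reduceMul, Nat.reduceAdd, Nat.zero_add,
      Nat.mul_zero] <;> omega
  | succ n ih =>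
    obtain ⟨i0, i1, i2, i3⟩ := ih
    have s4 : Fv (4 * n + 4) = Fv (4 * n + 3) + dd (4 * n + 3) := Fv_succ _
    have s5 : Fv (4 * n + 5) = Fv (4 * n + 4) + dd (4 * n + 4) := Fv_succ _
    have s6 : Fv (4 * n + 6) = Fv (4 * n + 5) + dd (4 * n + 5) := Fv_succ _
    have s7 : Fv (4 * n + 7) = Fv (4 * n + 6) + dd (4 * n + 6) := Fv_succ _
    have t2 : Fv (2 * n + 2) = Fv (2 * n + 1) + dd (2 * n + 1) := Fv_succ _
    have t3 : Fv (2 * n + 3) = Fv (2 * n + 2) + dd (2 * n + 2) := Fv_succ _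
    have t1 : Fv (n + 2) = Fv (n + 1) + dd (n + 1) := Fv_succ _
    have e1 : dd (4 * n + 3) = dd (2 * n + 1) := dd_four3 n
    have e2 : dd (4 * n + 4) = dd (2 * n + 2) := by
      have := dd_four0 (n + 1)
      rw [show 4 * (n+1) = 4 * n + 4 by ring, show 2 * (n+1) = 2*n+2 by ring] at this
      exact this
    have e3 : dd (4 * n + 5) = dd (n + 1) + 1 := by
      have := dd_four1 (n + 1); rw [show 4 * (n+1) + 1 = 4 * n + 5 by ring] at this; exact this
    have e4 : dd (4 * n + 6) = dd (n + 1) - 1 := by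
      have := dd_four2 (n + 1); rw [show 4 * (n+1) + 2 = 4 * n + 6 by ring] at this; exact this
    refine ⟨?_, ?_, ?_, ?_⟩
    · rw [show 4 * (n+1) = 4 * n + 4 by ring, show 2 * (n+1) = 2 * n + 2 by ring]; omega
    · rw [show 4 * (n+1) + 1 = 4 * n + 5 by ring, show 2 * (n+1) + 1 = 2 * n + 3 by ring]; omega
    · rw [show 4 * (n+1) + 2 = 4 * n + 6 by ring, show 2 * (n+1) + 1 = 2 * n + 3 by ring,
        show n+1+1 = n+2 by ring]; omega
    · rw [show 4 * (n+1) + 3 = 4 * n + 7 by ring, show 2 * (n+1) + 1 = 2 * n + 3 by ring,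
        show n+1+1 = n+2 by ring]; omega

/-! ### Jacobsthal number lemmas -/

lemma J_def (n : ℕ) : J (n + 2) = J (n + 1) + 2 * J n := rfl

lemma J_zero : J 0 = 1 := rfl
lemma J_one : J 1 = 1 := rfl
lemma J_two : J 2 = 3 := rfl

lemma J_step (t : ℕ) :
    J (2 * t + 1) + 1 = 2 * J (2 * t) ∧ J (2 * t + 2) = 2 * J (2 * t + 1) + 1 := by
  induction t with
  | zero => simp [J, J_def]
  | succ t ih =>
    obtain ⟨h1, h2⟩ := ih
    have d3 : J (2 * t + 3) = J (2 * t + 2) + 2 * J (2 * t + 1) := J_def _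
    have d4 : J (2 * t + 4) = J (2 * t + 3) + 2 * J (2 * t + 2) := J_def _
    constructor
    · rw [show 2 * (t + 1) + 1 = 2 * t + 3 by ring, show 2 * (t + 1) = 2 * t + 2 by ring]; omega
    · rw [show 2 * (t + 1) + 2 = 2 * t + 4 by ring, show 2 * (t + 1) + 1 = 2 * t + 3 by ring]; omega

lemma J_odd (m : ℕ) : J m % 2 = 1 := by
  induction m using Nat.strong_induction_on with
  | _ m ih =>
    match m with
    | 0 => rfl
    | 1 => rfl
    | (k + 2) =>
      have h1 := ih (k + 1) (by omega)
      rw [J_def]; omega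

lemma J_pos (m : ℕ) : 1 ≤ J m := by have := J_odd m; omega

/-! ### `Fv` is nonnegative, positive at even arguments, and zero exactly at Jacobsthal numbers -/

lemma Fv_zero : Fv 0 = 0 := rfl

lemma Fv_one : Fv 1 = 0 := by
  have h1 : Fv 1 = Fv 0 + dd 0 := rfl
  have d0 : dd 0 = 0 := by unfold dd S; norm_num
  rw [h1, d0, Fv_zero]; ring

lemma Fv_nonneg (n : ℕ) : 0 ≤ Fv n := by
  induction n using Nat.strong_induction_on with
  | _ n ih =>
    rcases Nat.lt_or_ge n 2 with h | h
    · interval_cases n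
      · rw [Fv_zero]
      · rw [Fv_one]
    · obtain ⟨k, hk⟩ : ∃ k, n = 4 * k ∨ n = 4 * k + 1 ∨ n = 4 * k + 2 ∨ n = 4 * k + 3 :=
        ⟨n / 4, by omega⟩
      rcases hk with hk | hk | hk | hk <;> subst hk
      · have hr := (Fv_rec k).1
        have h1 := ih k (by omega)
        have h2 := ih (2 * k) (by omega)
        omega
      · have hr := (Fv_rec k).2.1
        have h1 := ih k (by omega)
        have h2 := ih (2 * k + 1) (by omega)
        omega
      · have hr := (Fv_rec k).2.2.1
        have h1 := ih k (by omega)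
        have h2 := ih (k + 1) (by omega)
        have h3 := ih (2 * k + 1) (by omega)
        omega
      · have hr := (Fv_rec k).2.2.2
        have h2 := ih (k + 1) (by omega)
        have h3 := ih (2 * k + 1) (by omega)
        omega

lemma Fv_even_pos (k : ℕ) (hk : 1 ≤ k) : 0 < Fv (2 * k) := by
  induction k using Nat.strong_induction_on with
  | _ k ih =>
    obtain ⟨j, hj⟩ : ∃ j, k = 2 * j ∨ k = 2 * j + 1 := ⟨k / 2, by omega⟩
    rcases hj with hj | hj
    · have hr := (Fv_rec j).1
      have h1 := Fv_nonneg j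
      have h2 : 0 < Fv (2 * j) := ih j (by omega) (by omega)
      rw [show 2 * k = 4 * j by omega]
      omega
    · have hr := (Fv_rec j).2.2.1
      have h1 := Fv_nonneg j
      have h2 := Fv_nonneg (j + 1)
      have h3 := Fv_nonneg (2 * j + 1)
      rw [show 2 * k = 4 * j + 2 by omega]
      omega

lemma Fv_J (m : ℕ) : Fv (J m) = 0 := by
  suffices h : ∀ t, Fv (J (2 * t)) = 0 ∧ Fv (J (2 * t + 1)) = 0 by
    obtain ⟨t, ht⟩ : ∃ t, m = 2 * t ∨ m = 2 * t + 1 := ⟨m / 2, by omega⟩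
    rcases ht with ht | ht <;> rw [ht]
    · exact (h t).1
    · exact (h t).2
  intro t
  induction t with
  | zero =>
    refine ⟨?_, ?_⟩ <;> simp only [Nat.mul_zero, Nat.zero_add, J_zero, J_one, Fv_one]
  | succ t ih =>
    obtain ⟨ih0, ih1⟩ := ih
    obtain ⟨hs1, hs2⟩ := J_step t
    have hp := J_pos (2 * t)
    have hJ2 : J (2 * t + 2) = 4 * (J (2 * t) - 1) + 3 := by omega
    have hv2 : Fv (J (2 * t + 2)) = 0 := by
      have hr := (Fv_rec (J (2 * t) - 1)).2.2.2
      rw [hJ2, hr, show J (2 * t) - 1 + 1 = J (2 * t) by omega,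
        show 2 * (J (2 * t) - 1) + 1 = J (2 * t + 1) by omega, ih0, ih1]
      ring
    have he2 : 2 * (t + 1) = 2 * t + 2 := by ring
    refine ⟨by rw [he2]; exact hv2, ?_⟩
    obtain ⟨hs3, _⟩ := J_step (t + 1)
    rw [show 2 * (t + 1) + 1 = 2 * t + 3 by ring] at hs3 ⊢
    rw [he2] at hs3
    have hJ3 : J (2 * t + 3) = 4 * J (2 * t + 1) + 1 := by omega
    have hr := (Fv_rec (J (2 * t + 1))).2.1
    rw [hJ3, hr, show 2 * J (2 * t + 1) + 1 = J (2 * t + 2) by omega, ih1, hv2]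
    ring

lemma Fv_eq_zero_imp (n : ℕ) (hn : 1 ≤ n) (h : Fv n = 0) : ∃ m, n = J m := by
  induction n using Nat.strong_induction_on with
  | _ n ih =>
    rcases Nat.lt_or_ge n 2 with hlt | hge
    · exact ⟨0, by rw [J_zero]; omega⟩
    obtain ⟨k, hk⟩ : ∃ k, n = 2 * k ∨ n = 4 * k + 1 ∨ n = 4 * k + 3 :=
      ⟨if n % 2 = 0 then n / 2 else n / 4, by split <;> omega⟩
    rcases hk with hk | hk | hk
    · exfalso
      have := Fv_even_pos k (by omega)
      rw [← hk] at this; omega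
    · -- n = 4k+1, k ≥ 1
      have hk1 : 1 ≤ k := by omega
      have hr := (Fv_rec k).2.1
      have h1 := Fv_nonneg k
      have h2 := Fv_nonneg (2 * k + 1)
      have hfk : Fv k = 0 := by rw [← hk] at hr; omega
      have hfk2 : Fv (2 * k + 1) = 0 := by rw [← hk] at hr; omega
      obtain ⟨a, ha⟩ := ih k (by omega) (by omega) hfk
      obtain ⟨b, hb⟩ := ih (2 * k + 1) (by omega) (by omega) hfk2
      have hb2 : 2 ≤ b := by
        rcases b with _ | _ | b
        · rw [J_zero] at hb; omega
        · rw [J_one] at hb; omega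
        · omega
      obtain ⟨t, ht⟩ : ∃ t, b = 2 * t ∨ b = 2 * t + 1 := ⟨b / 2, by omega⟩
      rcases ht with ht | ht <;> subst ht
      · obtain ⟨hs1, _⟩ := J_step t
        exact ⟨2 * t + 1, by omega⟩
      · exfalso
        obtain ⟨hs1, _⟩ := J_step t
        have hoa := J_odd a
        have hob := J_odd (2 * t)
        omega
    · -- n = 4k+3
      have hr := (Fv_rec k).2.2.2
      have h1 := Fv_nonneg (k + 1)
      have h2 := Fv_nonneg (2 * k + 1)
      have hfk : Fv (k + 1) = 0 := by rw [← hk] at hr; omega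
      have hfk2 : Fv (2 * k + 1) = 0 := by rw [← hk] at hr; omega
      rcases Nat.eq_zero_or_pos k with hk0 | hk0
      · exact ⟨2, by rw [J_two]; omega⟩
      obtain ⟨a, ha⟩ := ih (k + 1) (by omega) (by omega) hfk
      obtain ⟨b, hb⟩ := ih (2 * k + 1) (by omega) (by omega) hfk2
      have hb2 : 2 ≤ b := by
        rcases b with _ | _ | b
        · rw [J_zero] at hb; omega
        · rw [J_one] at hb; omega
        · omega
      obtain ⟨t, ht⟩ : ∃ t, b = 2 * t ∨ b = 2 * t + 1 := ⟨b / 2, by omega⟩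
      rcases ht with ht | ht <;> subst ht
      · exfalso
        have ht1 : 1 ≤ t := by omega
        obtain ⟨_, hs2⟩ := J_step (t - 1)
        rw [show 2 * (t - 1) + 2 = 2 * t by omega] at hs2
        have hoa := J_odd a
        have hot := J_odd (2 * (t - 1) + 1)
        omega
      · obtain ⟨_, hs2⟩ := J_step t
        exact ⟨2 * t + 2, by omega⟩

/-! ### The 2-adic valuation of `T n` equals `Fv n` -/

lemma padicValRat_factorial' (m : ℕ) : padicValRat 2 ((m)! : ℚ) = (m : ℤ) - (S 2 m : ℤ) := by
  rw [padicValRat.of_nat]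
  have h := sub_one_mul_padicValNat_factorial (p := 2) m
  have hle := Nat.digit_sum_le 2 m
  unfold S
  omega

lemma padicValRat_prod (f : ℕ → ℚ) (n : ℕ) (hf : ∀ j, f j ≠ 0) :
    padicValRat 2 (∏ j ∈ range n, f j) = ∑ j ∈ range n, padicValRat 2 (f j) := by
  induction n with
  | zero => simp
  | succ n ih =>
    rw [Finset.prod_range_succ, Finset.sum_range_succ,
      padicValRat.mul (Finset.prod_ne_zero_iff.mpr (fun i _ => hf i)) (hf n), ih]

lemma val_factor (n j : ℕ) :
    padicValRat 2 (((3 * j + 1)! : ℚ) / ((n + j)! : ℚ))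
      = ((3 * j + 1 : ℤ) - (S 2 (3 * j + 1) : ℤ)) - ((n + j : ℤ) - (S 2 (n + j) : ℤ)) := by
  rw [padicValRat.div (by exact_mod_cast (3 * j + 1).factorial_ne_zero)
    (by exact_mod_cast (n + j).factorial_ne_zero),
    padicValRat_factorial', padicValRat_factorial']
  push_cast; ring

lemma G_double (n : ℕ) : ∑ m ∈ range (2 * n), S 2 m = 2 * (∑ m ∈ range n, S 2 m) + n := by
  induction n with
  | zero => simp
  | succ n ih =>
    rw [show 2 * (n + 1) = (2 * n) + 1 + 1 by ring, Finset.sum_range_succ, Finset.sum_range_succ,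
      Finset.sum_range_succ (f := fun m => S 2 m) (n := n), ih, S2_even, S2_odd]
    ring

lemma sum_shift (n : ℕ) : ∑ j ∈ range n, S 2 (n + j) = (∑ m ∈ range n, S 2 m) + n := by
  have h := Finset.sum_range_add (fun m => S 2 m) n n
  have h2 := G_double n
  rw [show 2 * n = n + n by ring] at h2
  omega

lemma Fv_explicit (n : ℕ) :
    Fv n = (n : ℤ) + (∑ k ∈ range n, (S 2 k : ℤ)) - ∑ k ∈ range n, (S 2 (3 * k + 1) : ℤ) := by
  induction n with
  | zero => simp [Fv]
  | succ n ih =>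
    rw [Fv_succ, ih, Finset.sum_range_succ, Finset.sum_range_succ]
    unfold dd; push_cast; ring

lemma sum_odd_sq (n : ℕ) : ∑ j ∈ range n, (2 * (j : ℤ) + 1) = (n : ℤ) ^ 2 := by
  induction n with
  | zero => simp
  | succ n ih => rw [Finset.sum_range_succ, ih]; push_cast; ring

lemma val_T (n : ℕ) : padicValRat 2 (T n) = Fv n := by
  unfold T
  rw [padicValRat_prod _ _ (fun j => div_ne_zero
    (by exact_mod_cast (3 * j + 1).factorial_ne_zero)
    (by exact_mod_cast (n + j).factorial_ne_zero))]
  rw [Finset.sum_congr rfl (fun j _ => val_factor n j)]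
  have e1 : ∀ j ∈ range n,
      ((3 * j + 1 : ℤ) - (S 2 (3 * j + 1) : ℤ)) - ((n + j : ℤ) - (S 2 (n + j) : ℤ))
      = ((2 * (j : ℤ) + 1) - (n : ℤ)) + ((S 2 (n + j) : ℤ) - (S 2 (3 * j + 1) : ℤ)) := by
    intro j _; push_cast; ring
  rw [Finset.sum_congr rfl e1]
  rw [Finset.sum_add_distrib, Finset.sum_sub_distrib, Finset.sum_sub_distrib,
    sum_odd_sq, Finset.sum_const, Finset.card_range, Fv_explicit]
  have h3 : ∑ j ∈ range n, (S 2 (n + j) : ℤ) = (∑ m ∈ range n, (S 2 m : ℤ)) + (n : ℤ) := by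
    have := sum_shift n
    norm_cast
  rw [h3]
  ring

/-! ### Main theorem -/

theorem stmt13 (n : ℕ) (hn : 0 < n) :
    padicValRat 2 (T n) = 0 ↔ ∃ m, n = J m := by
  rw [val_T]
  constructor
  · exact fun h => Fv_eq_zero_imp n hn h
  · rintro ⟨m, rfl⟩
    exact Fv_J m
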